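/- arXiv:1709.06961 — 2 statements merged into one kernel-verified Lean document; each statement's English description precedes it below -/
import Mathlib

section
/- Fix K ≥ 2 and a vector V ∈ ℝ^K. With H, S, Σ_∞ defined as in the context and a := √(1 + VᵀV), the matrix Σ_∞ satisfies the quadratic identity Σ_∞² − (2 + 2a²)·Σ_∞ + 4a²·I_L = 0, where I_L is the L×L identity. -/
open Matrix Kronecker

/-- The set of strictly ordered index pairs `P = {(i,j) : 1 ≤ i < j ≤ K}`. -/
abbrev OrderedPairs (K : ℕ) : Type := {p : Fin K × Fin K // p.1 < p.2}

/-- The selection matrix `H` picking the strictly upper-triangular coordinates: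
`H_{p,q} = 1` if `q = p` and `0` otherwise. -/
noncomputable abbrev selH (K : ℕ) : Matrix (OrderedPairs K) (Fin K × Fin K) ℝ :=
  Matrix.of fun p q => if q = p.1 then 1 else 0

/-- The commutation matrix `S`: `S_{(i,j),(k,l)} = 1` if `(k,l) = (j,i)` and `0` otherwise. -/
noncomputable abbrev commS (K : ℕ) : Matrix (Fin K × Fin K) (Fin K × Fin K) ℝ :=
  Matrix.of fun p q => if q = p.swap then 1 else 0

/-!
Write `C = I ⊗ VVᵀ`, `A = (I − S) C (I − S)` and `s = VᵀV`, so that `Σ_∞ = 2 + 2 H A Hᵀ` and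
`a² = 1 + s`; the identity then reduces to `M² = s M` for `M = H A Hᵀ`.
From `S² = 1` and `C² = s C` one gets `A² = 2 s A`, where the cross term vanishes because
`C S C = (VVᵀ ⊗ VVᵀ) S` is fixed by `S` on the left. To pass from `A²` to
`M² = H (A HᵀH A) Hᵀ`, split the identity as `HᵀH + S HᵀH S + D` with `HᵀH`, `S HᵀH S`, `D` the
diagonal projections onto the coordinates `(i,j)` with `i < j`, `i > j`, `i = j`. Since
`A S = S A = −A`, the middle term contributes `A HᵀH A` again and `A` vanishes on the range of
`D`; hence `2 A HᵀH A = A² = 2 s A`.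
-/

section CommutationMatrix

variable {K : ℕ}

theorem commS_eq_toMatrix : commS K = (Equiv.prodComm (Fin K) (Fin K)).toPEquiv.toMatrix := by
  ext p q
  simp [eq_comm]

theorem commS_mul {n : Type*} (X : Matrix (Fin K × Fin K) n ℝ) :
    commS K * X = X.submatrix Prod.swap id := by
  rw [commS_eq_toMatrix, PEquiv.toMatrix_toPEquiv_mul]
  rfl

theorem mul_commS {m : Type*} (X : Matrix m (Fin K × Fin K) ℝ) :
    X * commS K = X.submatrix id Prod.swap := by
  rw [commS_eq_toMatrix, PEquiv.mul_toMatrix_toPEquiv]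
  rfl

theorem commS_mul_self : commS K * commS K = 1 := by
  ext p q
  simp [commS_mul, one_apply, eq_comm]

theorem commS_mul_one_sub_commS : commS K * (1 - commS K) = -(1 - commS K) := by
  rw [mul_sub, mul_one, commS_mul_self, neg_sub]

theorem one_sub_commS_mul_commS : (1 - commS K) * commS K = -(1 - commS K) := by
  rw [sub_mul, one_mul, commS_mul_self, neg_sub]

theorem one_sub_commS_mul_self : (1 - commS K) * (1 - commS K) = (2 : ℝ) • (1 - commS K) := by
  rw [sub_mul, one_mul, commS_mul_one_sub_commS, sub_neg_eq_add, two_smul]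

theorem commS_mul_kronecker_mul_commS (A B : Matrix (Fin K) (Fin K) ℝ) :
    commS K * (A ⊗ₖ B) * commS K = B ⊗ₖ A := by
  ext p q
  simp [commS_mul, mul_commS, mul_comm]

theorem commS_mul_diagonal_mul_commS (d : Fin K × Fin K → ℝ) :
    commS K * diagonal d * commS K = diagonal (d ∘ Prod.swap) := by
  rw [commS_mul, mul_commS, submatrix_submatrix]
  exact submatrix_diagonal_equiv d (Equiv.prodComm _ _)

theorem commS_mul_vecMulVec_kronecker_vecMulVec (u w x : Fin K → ℝ) :
    commS K * (vecMulVec u w ⊗ₖ vecMulVec u x) = vecMulVec u w ⊗ₖ vecMulVec u x := by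
  ext p q
  simp only [commS_mul, submatrix_apply, kroneckerMap_apply, vecMulVec_apply, Prod.fst_swap,
    Prod.snd_swap, id]
  ring

theorem one_kronecker_mul_commS_mul_one_kronecker (B : Matrix (Fin K) (Fin K) ℝ) :
    (1 ⊗ₖ B) * commS K * (1 ⊗ₖ B) = (B ⊗ₖ B) * commS K := by
  calc (1 ⊗ₖ B) * commS K * (1 ⊗ₖ B)
      = (1 ⊗ₖ B) * (commS K * (1 ⊗ₖ B) * commS K) * commS K := by
        simp only [mul_assoc, commS_mul_self, mul_one]
    _ = (B ⊗ₖ B) * commS K := by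
        rw [commS_mul_kronecker_mul_commS, ← mul_kronecker_mul, one_mul, mul_one]

end CommutationMatrix

theorem one_kronecker_vecMulVec_mul_self {R m n : Type*} [CommRing R] [Fintype m] [DecidableEq m]
    [Fintype n] (v : n → R) :
    ((1 : Matrix m m R) ⊗ₖ vecMulVec v v) * (1 ⊗ₖ vecMulVec v v) =
      (v ⬝ᵥ v) • ((1 : Matrix m m R) ⊗ₖ vecMulVec v v) := by
  rw [← mul_kronecker_mul, one_mul, vecMulVec_mul_vecMulVec, vecMulVec_smul, kronecker_smul]

section Antisymmetrization

variable {K : ℕ} (V : Fin K → ℝ)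

noncomputable def antisymmKron : Matrix (Fin K × Fin K) (Fin K × Fin K) ℝ :=
  (1 - commS K) * (1 ⊗ₖ vecMulVec V V) * (1 - commS K)

theorem commS_mul_antisymmKron : commS K * antisymmKron V = -antisymmKron V := by
  rw [antisymmKron, ← mul_assoc, ← mul_assoc, commS_mul_one_sub_commS, neg_mul, neg_mul]

theorem antisymmKron_mul_commS : antisymmKron V * commS K = -antisymmKron V := by
  rw [antisymmKron, mul_assoc, one_sub_commS_mul_commS, mul_neg]

theorem one_sub_commS_mul_kronecker_mul_commS_mul_kronecker :
    (1 - commS K) * ((1 ⊗ₖ vecMulVec V V) * commS K * (1 ⊗ₖ vecMulVec V V)) = 0 := by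
  rw [one_kronecker_mul_commS_mul_one_kronecker, sub_mul, one_mul, ← mul_assoc,
    commS_mul_vecMulVec_kronecker_vecMulVec, sub_self]

theorem antisymmKron_mul_self :
    antisymmKron V * antisymmKron V = (2 * (V ⬝ᵥ V)) • antisymmKron V := by
  have hcross := one_sub_commS_mul_kronecker_mul_commS_mul_kronecker V
  set C : Matrix (Fin K × Fin K) (Fin K × Fin K) ℝ := 1 ⊗ₖ vecMulVec V V
  have hmiddle : C * (1 - commS K) * C = (V ⬝ᵥ V) • C - C * commS K * C := by
    rw [mul_sub, mul_one, sub_mul, one_kronecker_vecMulVec_mul_self]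
  calc antisymmKron V * antisymmKron V
      = (1 - commS K) * C * ((1 - commS K) * (1 - commS K)) * C * (1 - commS K) := by
        simp only [antisymmKron, C, mul_assoc]
    _ = (2 : ℝ) • ((1 - commS K) * (C * (1 - commS K) * C) * (1 - commS K)) := by
        rw [one_sub_commS_mul_self]
        simp only [Matrix.smul_mul, Matrix.mul_smul, mul_assoc]
    _ = (2 : ℝ) • ((1 - commS K) * ((V ⬝ᵥ V) • C) * (1 - commS K)) := by
        rw [hmiddle, mul_sub (1 - commS K), hcross, sub_zero]
    _ = (2 * (V ⬝ᵥ V)) • antisymmKron V := by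
        rw [Matrix.mul_smul, Matrix.smul_mul, smul_smul]
        rfl

end Antisymmetrization

section Selection

variable {K : ℕ}

theorem selH_transpose_mul_selH :
    (selH K)ᵀ * selH K = diagonal fun p => if p.1 < p.2 then 1 else 0 := by
  ext p q
  simp only [mul_apply, transpose_apply, of_apply]
  rw [← Finset.sum_subtype {r | r.1 < r.2} (fun _ => Finset.mem_filter_univ _)
    (f := fun r => (if p = r then (1 : ℝ) else 0) * if q = r then 1 else 0)]
  by_cases hpq : p = q <;> simp [hpq]

theorem selH_transpose_mul_selH_add_conj_add_diagonal :
    (selH K)ᵀ * selH K + commS K * ((selH K)ᵀ * selH K) * commS K +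
      diagonal (fun p => if p.1 = p.2 then 1 else 0) = 1 := by
  rw [selH_transpose_mul_selH, commS_mul_diagonal_mul_commS, diagonal_add, diagonal_add,
    ← diagonal_one]
  congr 1
  ext p
  rcases lt_trichotomy p.1 p.2 with h | h | h
  · simp [h, h.ne, h.not_gt]
  · simp [h]
  · simp [h, h.ne', h.not_gt]

theorem mul_diagonal_eq_zero_of_mul_commS_eq_neg {m : Type*} {X : Matrix m (Fin K × Fin K) ℝ}
    (hX : X * commS K = -X) :
    X * diagonal (fun p : Fin K × Fin K => if p.1 = p.2 then (1 : ℝ) else 0) = 0 := by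
  ext i q
  rw [mul_diagonal, Matrix.zero_apply]
  by_cases hq : q.1 = q.2
  · have hswap : q.swap = q := Prod.ext hq.symm hq
    have h := congrFun (congrFun hX i) q
    rw [mul_commS, submatrix_apply, id, hswap, neg_apply] at h
    rw [self_eq_neg.mp h, zero_mul]
  · rw [if_neg hq, mul_zero]

variable (V : Fin K → ℝ)

theorem antisymmKron_mul_selH_transpose_mul_selH_mul_antisymmKron :
    antisymmKron V * ((selH K)ᵀ * selH K) * antisymmKron V = (V ⬝ᵥ V) • antisymmKron V := by
  set A := antisymmKron V
  set Q := (selH K)ᵀ * selH K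
  have hconj : A * (commS K * Q * commS K) * A = A * Q * A := by
    calc A * (commS K * Q * commS K) * A = (A * commS K) * Q * (commS K * A) := by
          simp only [mul_assoc]
      _ = A * Q * A := by
          rw [antisymmKron_mul_commS, commS_mul_antisymmKron, neg_mul, mul_neg, neg_mul, neg_neg]
  have hdiag := mul_diagonal_eq_zero_of_mul_commS_eq_neg (antisymmKron_mul_commS V)
  have hsplit : (2 : ℝ) • (A * Q * A) = A * A := by
    calc (2 : ℝ) • (A * Q * A)
        = A * (Q + commS K * Q * commS K + diagonal fun p => if p.1 = p.2 then 1 else 0) * A := by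
          rw [mul_add, mul_add, add_mul, add_mul, hdiag, zero_mul, add_zero, hconj, two_smul]
      _ = A * A := by rw [selH_transpose_mul_selH_add_conj_add_diagonal, mul_one]
  rw [antisymmKron_mul_self, mul_smul] at hsplit
  exact smul_right_injective _ two_ne_zero hsplit

theorem selH_mul_antisymmKron_mul_transpose_mul_self :
    selH K * antisymmKron V * (selH K)ᵀ * (selH K * antisymmKron V * (selH K)ᵀ) =
      (V ⬝ᵥ V) • (selH K * antisymmKron V * (selH K)ᵀ) := by
  calc selH K * antisymmKron V * (selH K)ᵀ * (selH K * antisymmKron V * (selH K)ᵀ)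
      = selH K * (antisymmKron V * ((selH K)ᵀ * selH K) * antisymmKron V) * (selH K)ᵀ := by
        simp only [Matrix.mul_assoc]
    _ = (V ⬝ᵥ V) • (selH K * antisymmKron V * (selH K)ᵀ) := by
        rw [antisymmKron_mul_selH_transpose_mul_selH_mul_antisymmKron, Matrix.mul_smul,
          Matrix.smul_mul]

end Selection

theorem quadratic_identity_of_mul_self_eq_smul {𝕜 R : Type*} [CommRing 𝕜] [Ring R] [Algebra 𝕜 R]
    {M : R} {s : 𝕜} (hM : M * M = s • M) :
    ((2 : 𝕜) • 1 + (2 : 𝕜) • M) ^ 2 - (2 + 2 * (1 + s)) • ((2 : 𝕜) • 1 + (2 : 𝕜) • M) +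
      (4 * (1 + s)) • 1 = 0 := by
  rw [sq]
  simp only [mul_add, add_mul, smul_mul_smul, one_mul, mul_one, hM, smul_smul]
  module

theorem limiting_covariance_quadratic_identity_general
    (K : ℕ) (V : Fin K → ℝ) :
    letI Sinf : Matrix (OrderedPairs K) (OrderedPairs K) ℝ :=
      (2 : ℝ) • (1 : Matrix (OrderedPairs K) (OrderedPairs K) ℝ) +
        (2 : ℝ) • (selH K * (1 - commS K) *
          ((1 : Matrix (Fin K) (Fin K) ℝ) ⊗ₖ Matrix.vecMulVec V V) *
          (1 - commS K) * (selH K)ᵀ)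
    letI a : ℝ := Real.sqrt (1 + ∑ i, V i * V i)
    Sinf ^ 2 - (2 + 2 * a ^ 2) • Sinf +
      (4 * a ^ 2) • (1 : Matrix (OrderedPairs K) (OrderedPairs K) ℝ) = 0 := by
  have ha : √(1 + ∑ i, V i * V i) ^ 2 = 1 + V ⬝ᵥ V :=
    Real.sq_sqrt (add_nonneg zero_le_one (Finset.sum_nonneg fun i _ => mul_self_nonneg (V i)))
  have hM : selH K * (1 - commS K) * ((1 : Matrix (Fin K) (Fin K) ℝ) ⊗ₖ vecMulVec V V) *
      (1 - commS K) * (selH K)ᵀ = selH K * antisymmKron V * (selH K)ᵀ := by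
    simp only [antisymmKron, Matrix.mul_assoc]
  rw [ha, hM]
  exact quadratic_identity_of_mul_self_eq_smul (selH_mul_antisymmKron_mul_transpose_mul_self V)

/-- **Quadratic (minimal polynomial) identity for `Σ_∞`.**
Fix `K ≥ 2` and `V ∈ ℝ^K`.  With
`Σ_∞ = 2·I_L + 2·H·(I − S)·(I_K ⊗ V·Vᵀ)·(I − S)·Hᵀ` and `a = √(1 + VᵀV)`, the matrix `Σ_∞`
satisfies `Σ_∞² − (2 + 2a²)·Σ_∞ + 4a²·I_L = 0`. -/
theorem limiting_covariance_quadratic_identity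
    (K : ℕ) (hK : 2 ≤ K) (V : Fin K → ℝ) :
    letI Sinf : Matrix (OrderedPairs K) (OrderedPairs K) ℝ :=
      (2 : ℝ) • (1 : Matrix (OrderedPairs K) (OrderedPairs K) ℝ) +
        (2 : ℝ) • (selH K * (1 - commS K) *
          ((1 : Matrix (Fin K) (Fin K) ℝ) ⊗ₖ Matrix.vecMulVec V V) *
          (1 - commS K) * (selH K)ᵀ)
    letI a : ℝ := Real.sqrt (1 + ∑ i, V i * V i)
    Sinf ^ 2 - (2 + 2 * a ^ 2) • Sinf +
      (4 * a ^ 2) • (1 : Matrix (OrderedPairs K) (OrderedPairs K) ℝ) = 0 :=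
  limiting_covariance_quadratic_identity_general K V
end

section
/- Fix K ≥ 2, h > 0, a vector V ∈ ℝ^K, and a vector η ∈ ℝ^K with η₁ ≥ η₂ ≥ … ≥ η_K ≥ 0. With H, S, Q, Q^{1/2}, Δw, Σ^Q_∞ defined as in the context, the matrix Σ^Q_∞ − 2·η_{K−1}·η_K·I_L is symmetric positive semidefinite; consequently every eigenvalue of Σ^Q_∞ is at least 2·η_{K−1}·η_K. -/
open Matrix Kronecker

/-! The matrix `Σ^Q_∞` is the restriction to the coordinates `i < j` of
`2 (Q ⊗ Q) + (2/h) (I − S)(Q ⊗ Δw Δwᵀ)(I − S)`. The second summand is a congruence of a Kronecker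
product of positive semidefinite matrices, hence positive semidefinite, and the first is diagonal
with entries `2 ηᵢ ηⱼ`, which for `i < j` and decreasing nonnegative `η` are at least
`2 η_{K−1} η_K`. -/

lemma selH_mul_mul_transpose {K : ℕ} (M : Matrix (Fin K × Fin K) (Fin K × Fin K) ℝ) :
    selH K * M * (selH K)ᵀ = M.submatrix Subtype.val Subtype.val := by
  ext p p'
  simp [mul_apply, ite_mul, mul_ite]

lemma commS_transpose {K : ℕ} : (commS K)ᵀ = commS K := by
  ext p q
  simp only [transpose_apply, of_apply]
  exact if_congr (Prod.swap_eq_iff_eq_swap.symm.trans eq_comm) rfl rfl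

lemma Matrix.PosSemidef.le_of_mulVec_eq_smul {n : Type*} [Fintype n] [DecidableEq n]
    {A : Matrix n n ℝ} {c μ : ℝ} (hA : (A - c • 1).PosSemidef) {x : n → ℝ} (hx : x ≠ 0)
    (hAx : A *ᵥ x = μ • x) : c ≤ μ := by
  have hquad : c * (x ⬝ᵥ x) ≤ μ * (x ⬝ᵥ x) := by
    simpa [sub_mulVec, hAx, smul_mulVec, sub_smul] using hA.dotProduct_mulVec_nonneg x
  exact le_of_mul_le_mul_right hquad (dotProduct_self_star_pos_iff.mpr hx)

lemma Antitone.mul_last_two_le_mul {K : ℕ} {η : Fin K → ℝ} (hη : Antitone η)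
    (hnonneg : ∀ i, 0 ≤ η i) {a b : Fin K} (ha : (a : ℕ) = K - 2) (hb : (b : ℕ) = K - 1)
    {i j : Fin K} (hij : i < j) : η a * η b ≤ η i * η j := by
  have hi : i ≤ a := Fin.le_iff_val_le_val.mpr (by omega)
  have hj : j ≤ b := Fin.le_iff_val_le_val.mpr (by omega)
  exact mul_le_mul (hη hi) (hη hj) (hnonneg _) (hnonneg _)

lemma posSemidef_two_smul_kronecker_diagonal_sub {K : ℕ} {η : Fin K → ℝ}
    (hη : Antitone η) (hnonneg : ∀ i, 0 ≤ η i) {a b : Fin K} (ha : (a : ℕ) = K - 2)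
    (hb : (b : ℕ) = K - 1) :
    ((2 : ℝ) • (diagonal η ⊗ₖ diagonal η).submatrix Subtype.val Subtype.val -
      (2 * η a * η b) •
        (1 : Matrix (OrderedPairs K) (OrderedPairs K) ℝ)).PosSemidef := by
  rw [diagonal_kronecker_diagonal, submatrix_diagonal _ _ Subtype.val_injective,
    smul_one_eq_diagonal, ← diagonal_smul, diagonal_sub, posSemidef_diagonal_iff]
  intro p
  have := hη.mul_last_two_le_mul hnonneg ha hb p.2
  simp only [Function.comp_apply, Pi.smul_apply, smul_eq_mul]
  linarith

lemma Matrix.PosSemidef.one_sub_commS_mul_mul_one_sub_commS {K : ℕ}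
    {A : Matrix (Fin K × Fin K) (Fin K × Fin K) ℝ} (hA : A.PosSemidef) :
    ((1 - commS K) * A * (1 - commS K)).PosSemidef := by
  have hsymm : (1 - commS K)ᴴ = 1 - commS K := by
    rw [conjTranspose_eq_transpose_of_trivial, transpose_sub, transpose_one, commS_transpose]
  have hcongr := hA.mul_mul_conjTranspose_same (1 - commS K)
  rwa [hsymm] at hcongr

/-- **Smallest-eigenvalue bound for `Σ^Q_∞`.**
Fix `K ≥ 2`, `h > 0`, `V ∈ ℝ^K`, and `η ∈ ℝ^K` with `η₁ ≥ η₂ ≥ … ≥ η_K ≥ 0`.  With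
`Q = diag(η)`, `Q^{1/2} = diag(√η)`, `Δw = √h·Q^{1/2}·V`, and
`Σ^Q_∞ = 2·H·(Q ⊗ Q)·Hᵀ + (2/h)·H·(I − S)·(Q ⊗ (Δw·Δwᵀ))·(I − S)·Hᵀ`,
the matrix `Σ^Q_∞ − 2·η_{K−1}·η_K·I_L` is symmetric positive semidefinite; consequently every
eigenvalue of `Σ^Q_∞` is at least `2·η_{K−1}·η_K`. -/
theorem limiting_covariance_smallest_eigenvalue_bound
    (K : ℕ) (hK : 2 ≤ K) (h : ℝ) (hh : 0 < h) (V η : Fin K → ℝ)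
    (hmono : ∀ i j : Fin K, i ≤ j → η j ≤ η i) (hnonneg : ∀ i, 0 ≤ η i) :
    letI Q : Matrix (Fin K) (Fin K) ℝ := Matrix.diagonal η
    letI Qhalf : Matrix (Fin K) (Fin K) ℝ := Matrix.diagonal fun i => Real.sqrt (η i)
    letI Δw : Fin K → ℝ := Real.sqrt h • Qhalf.mulVec V
    letI SQinf : Matrix (OrderedPairs K) (OrderedPairs K) ℝ :=
      (2 : ℝ) • (selH K * (Q ⊗ₖ Q) * (selH K)ᵀ) +
        (2 / h) • (selH K * (1 - commS K) * (Q ⊗ₖ Matrix.vecMulVec Δw Δw) *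
          (1 - commS K) * (selH K)ᵀ)
    letI ηKm1 : ℝ := η ⟨K - 2, by omega⟩
    letI ηK : ℝ := η ⟨K - 1, by omega⟩
    (SQinf - (2 * ηKm1 * ηK) • (1 : Matrix (OrderedPairs K) (OrderedPairs K) ℝ)).PosSemidef ∧
      ∀ (μ : ℝ) (x : OrderedPairs K → ℝ), x ≠ 0 → SQinf.mulVec x = μ • x →
        2 * ηKm1 * ηK ≤ μ := by
  set Δw : Fin K → ℝ := Real.sqrt h • (diagonal fun i => Real.sqrt (η i)) *ᵥ V
  set c : ℝ := 2 * η ⟨K - 2, by omega⟩ * η ⟨K - 1, by omega⟩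
  set jump := (1 - commS K) * (diagonal η ⊗ₖ vecMulVec Δw Δw) * (1 - commS K)
  set SQinf : Matrix (OrderedPairs K) (OrderedPairs K) ℝ :=
    (2 : ℝ) • (selH K * (diagonal η ⊗ₖ diagonal η) * (selH K)ᵀ) +
      (2 / h) • (selH K * (1 - commS K) * (diagonal η ⊗ₖ vecMulVec Δw Δw) *
        (1 - commS K) * (selH K)ᵀ)
  have hsplit : SQinf - c • 1 =
      ((2 : ℝ) • (diagonal η ⊗ₖ diagonal η).submatrix Subtype.val Subtype.val - c • 1) +
        (2 / h) • jump.submatrix Subtype.val Subtype.val := by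
    simp only [SQinf, jump, ← selH_mul_mul_transpose, Matrix.mul_assoc]
    abel
  have hjump : jump.PosSemidef :=
    ((posSemidef_diagonal_iff.mpr hnonneg).kronecker
      (posSemidef_vecMulVec_self_star Δw)).one_sub_commS_mul_mul_one_sub_commS
  have hpsd : (SQinf - c • 1).PosSemidef := by
    rw [hsplit]
    exact (posSemidef_two_smul_kronecker_diagonal_sub hmono hnonneg rfl rfl).add
      ((hjump.submatrix _).smul (by positivity))
  exact ⟨hpsd, fun μ x hx hμ => hpsd.le_of_mulVec_eq_smul hx hμ⟩
end
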